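/- Let r ≥ 2 and let G′ be a complete r-partite graph with parts V′_1, …, V′_r, let M′ be a perfect matching of G′, and let α = sup_{N≥2} N!/d_N, where d_N is the number of derangements of [N]. For a perfect matching P of G′, let S(P) = (P_{i,j})_{i≠j∈[r]}, where P_{i,j} is the set of vertices x ∈ V′_i matched by P to a vertex of V′_j. Suppose S = S(P₀) for some perfect matching P₀ of G′ with P₀ ∩ M′ = ∅. Then the number of perfect matchings U of G′ with S(U) = S is at most α^{binom(r,2)} times the number of perfect matchings U of G′ with S(U) = S and U ∩ M′ = ∅. -/

import Mathlib

open SimpleGraph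

/-- `α = sup_{N ≥ 2} N! / d_N`, where `d_N` is the number of derangements of `[N]`. -/
noncomputable def alphaDer : ℝ :=
  sSup {x : ℝ | ∃ N : ℕ, 2 ≤ N ∧ x = (Nat.factorial N : ℝ) / (numDerangements N : ℝ)}

/-!
A perfect matching `U` is the same thing as an involution `f` of the vertex set with every
`x` adjacent to `f x`, and `S(U) = S(P₀)` says that `f x` lies in the same part as `f₀ x`,
where `f₀` is the partner map of `P₀`. Such involutions correspond to families, indexed by the
pairs `i < j`, of bijections `P_{i,j} ≃ P_{j,i}`, and `U ∩ M' = ∅` says that each of them avoids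
the partial bijection induced by `M'`. Composing derangements with an extension of that partial
bijection gives at least `d_N` avoiding bijections when `|P_{i,j}| = N`, and `N! ≤ 3 d_N` for
`N ≥ 2`, with equality at `N = 3`, so `α = 3`; when `N ≤ 1` the bijection induced by `P₀`
itself avoids `M'`.
-/

open Function
open scoped Nat

theorem factorial_le_three_mul_numDerangements {n : ℕ} (hn : 2 ≤ n) :
    n ! ≤ 3 * numDerangements n := by
  induction n using Nat.strong_induction_on with
  | _ n ih =>
    match n, hn with
    | 2, _ => decide
    | 3, _ => decide
    | n + 4, _ =>
      have h₂ := ih (n + 2) (by omega) (by omega)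
      have h₃ := ih (n + 3) (by omega) (by omega)
      calc (n + 4)! = (n + 3) * ((n + 2)! + (n + 3)!) := by
            simp only [Nat.factorial_succ]; ring
        _ ≤ (n + 3) * (3 * numDerangements (n + 2) + 3 * numDerangements (n + 3)) := by
            gcongr
        _ = 3 * numDerangements (n + 4) := by
            rw [numDerangements_add_two (n + 2)]; ring

theorem alphaDer_eq_three : alphaDer = 3 := by
  refine IsGreatest.csSup_eq ⟨⟨3, Nat.le_succ 2, by norm_num [numDerangements_add_two]⟩, ?_⟩
  rintro x ⟨N, hN, rfl⟩
  have hd : 0 < numDerangements N := by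
    have := factorial_le_three_mul_numDerangements hN
    have := Nat.factorial_pos N
    omega
  rw [div_le_iff₀ (by exact_mod_cast hd)]
  exact_mod_cast factorial_le_three_mul_numDerangements hN

namespace SimpleGraph.Subgraph

variable {V : Type*} {G : SimpleGraph V}

namespace IsPerfectMatching

variable {M : G.Subgraph} (hM : M.IsPerfectMatching)

noncomputable def partner (v : V) : V :=
  (isPerfectMatching_iff.1 hM v).choose

theorem adj_partner (v : V) : M.Adj v (hM.partner v) :=
  (isPerfectMatching_iff.1 hM v).choose_spec.1

theorem eq_partner_of_adj {v w : V} (h : M.Adj v w) : w = hM.partner v :=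
  (isPerfectMatching_iff.1 hM v).choose_spec.2 w h

theorem partner_involutive : Involutive hM.partner := fun v =>
  (hM.eq_partner_of_adj (hM.adj_partner v).symm).symm

theorem setOf_adj_eq {ι : Type*} (c : V → ι) (i j : ι) :
    {x | c x = i ∧ ∃ y, M.Adj x y ∧ c y = j} = {x | c x = i ∧ c (hM.partner x) = j} := by
  ext x
  refine and_congr_right fun _ => ⟨?_, fun h => ⟨_, hM.adj_partner x, h⟩⟩
  rintro ⟨y, hy, rfl⟩
  rw [← hM.eq_partner_of_adj hy]

theorem setOf_adj_eq_iff {ι : Type*} (c : V → ι) {M' : G.Subgraph}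
    (hM' : M'.IsPerfectMatching) :
    (∀ i j, {x | c x = i ∧ ∃ y, M.Adj x y ∧ c y = j} =
        {x | c x = i ∧ ∃ y, M'.Adj x y ∧ c y = j}) ↔
      ∀ x, c (hM.partner x) = c (hM'.partner x) := by
  simp only [hM.setOf_adj_eq, hM'.setOf_adj_eq]
  refine ⟨fun h x => ?_, fun h i j => by simp only [h]⟩
  have hx : x ∈ {x' | c x' = c x ∧ c (hM'.partner x') = c (hM'.partner x)} := ⟨rfl, rfl⟩
  rw [← h] at hx
  exact hx.2

theorem edgeSet_inter_eq_empty_iff {M' : G.Subgraph} (hM' : M'.IsPerfectMatching) :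
    M.edgeSet ∩ M'.edgeSet = ∅ ↔ ∀ v, hM.partner v ≠ hM'.partner v := by
  refine ⟨fun h v hv => ?_, fun h => ?_⟩
  · have : s(v, hM.partner v) ∈ M.edgeSet ∩ M'.edgeSet :=
      ⟨hM.adj_partner v, hv ▸ hM'.adj_partner v⟩
    simp [h] at this
  · refine Set.eq_empty_iff_forall_notMem.2 (Sym2.ind fun v w ⟨hvw, hvw'⟩ => h v ?_)
    rw [← hM.eq_partner_of_adj hvw, ← hM'.eq_partner_of_adj hvw']

end IsPerfectMatching

def ofInvolutive (f : V → V) (hf : Involutive f) (hG : ∀ v, G.Adj v (f v)) : G.Subgraph where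
  verts := Set.univ
  Adj v w := f v = w
  adj_sub := by rintro v _ rfl; exact hG v
  edge_vert _ := Set.mem_univ _
  symm := ⟨by rintro v _ rfl; exact hf v⟩

variable {f : V → V} (hf : Involutive f) (hG : ∀ v, G.Adj v (f v))

theorem isPerfectMatching_ofInvolutive : (ofInvolutive f hf hG).IsPerfectMatching :=
  isPerfectMatching_iff.2 fun v => ⟨f v, rfl, fun _ h => Eq.symm h⟩

theorem partner_ofInvolutive : (isPerfectMatching_ofInvolutive hf hG).partner = f :=
  funext fun _ => ((isPerfectMatching_ofInvolutive hf hG).eq_partner_of_adj rfl).symm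

theorem ofInvolutive_partner {M : G.Subgraph} (hM : M.IsPerfectMatching) :
    ofInvolutive hM.partner hM.partner_involutive (fun v => M.adj_sub (hM.adj_partner v)) = M := by
  ext v w
  · exact iff_of_true trivial (hM.2 v)
  · exact ⟨fun h => h ▸ hM.adj_partner v, fun h => (hM.eq_partner_of_adj h).symm⟩

theorem card_isPerfectMatching_and {Q : G.Subgraph → Prop} {Q' : (V → V) → Prop}
    (hQ : ∀ M (hM : M.IsPerfectMatching), Q M ↔ Q' hM.partner)
    (hG : ∀ f, Involutive f → Q' f → ∀ v, G.Adj v (f v)) :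
    Nat.card {M : G.Subgraph // M.IsPerfectMatching ∧ Q M} =
      Nat.card {f : V → V // Involutive f ∧ Q' f} :=
  Nat.card_congr
    { toFun M := ⟨IsPerfectMatching.partner M.2.1, IsPerfectMatching.partner_involutive M.2.1,
        (hQ _ M.2.1).1 M.2.2⟩
      invFun f := ⟨ofInvolutive f.1 f.2.1 (hG _ f.2.1 f.2.2),
        isPerfectMatching_ofInvolutive f.2.1 (hG _ f.2.1 f.2.2),
        (hQ _ _).2 (by rw [partner_ofInvolutive]; exact f.2.2)⟩
      left_inv M := Subtype.ext (ofInvolutive_partner M.2.1)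
      right_inv f := Subtype.ext (partner_ofInvolutive f.2.1 (hG _ f.2.1 f.2.2)) }

end SimpleGraph.Subgraph

section Avoiding

variable {A B C : Type*} [Finite A] {u : A → C} {v : B → C}

theorem exists_equiv_extend_of_injective (e : A ≃ B) (hu : Injective u) (hv : Injective v) :
    ∃ M : A ≃ B, ∀ a b, v b = u a → M a = b := by
  classical
  have := Fintype.ofFinite A
  have := Fintype.ofEquiv A e
  let f (a : A) : B := if h : ∃ b, v b = u a then h.choose else e a
  have hf {a : A} (h : ∃ b, v b = u a) : v (f a) = u a := by
    simp only [f, dif_pos h]; exact h.choose_spec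
  have hinj : Set.InjOn f {a | ∃ b, v b = u a} := fun a ha a' ha' haa' =>
    hu ((hf ha).symm.trans (haa' ▸ hf ha'))
  obtain ⟨g, hg⟩ := Set.MapsTo.exists_equiv_extend_of_card_eq
    (by rw [Finset.card_univ]; exact Fintype.card_congr e) (fun _ _ => Finset.mem_univ _) hinj
  refine ⟨g.trans (Equiv.subtypeUnivEquiv Finset.mem_univ), fun a b hab => ?_⟩
  have ha : ∃ b, v b = u a := ⟨b, hab⟩
  exact (hg a ha).trans (hv ((hf ha).trans hab.symm))

theorem numDerangements_le_card_avoiding (e : A ≃ B) (hu : Injective u) (hv : Injective v) :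
    numDerangements (Nat.card A) ≤ Nat.card {g : A ≃ B // ∀ a, v (g a) ≠ u a} := by
  classical
  have := Fintype.ofFinite A
  have := Finite.of_equiv A e
  obtain ⟨M, hM⟩ := exists_equiv_extend_of_injective e hu hv
  let toAvoiding (σ : derangements A) : {g : A ≃ B // ∀ a, v (g a) ≠ u a} :=
    ⟨σ.1.trans M, fun a h => σ.2 a (M.injective (hM a _ h).symm)⟩
  have hinj : Injective toAvoiding := fun σ τ h =>
    Subtype.ext (Equiv.ext fun a => M.injective (Equiv.congr_fun (congrArg Subtype.val h) a))
  rw [Nat.card_eq_fintype_card, ← card_derangements_eq_numDerangements, ← Nat.card_eq_fintype_card]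
  exact Nat.card_le_card_of_injective toAvoiding hinj

theorem card_equiv_le_three_mul_card_avoiding (e : A ≃ B) (hu : Injective u)
    (hv : Injective v) (he : ∀ a, v (e a) ≠ u a) :
    Nat.card (A ≃ B) ≤ 3 * Nat.card {g : A ≃ B // ∀ a, v (g a) ≠ u a} := by
  have := Finite.of_equiv A e
  rw [Nat.card_congr (Equiv.equivCongr (Equiv.refl A) e.symm), Nat.card_perm]
  rcases le_or_gt (Nat.card A) 1 with h | h
  · have : Nonempty {g : A ≃ B // ∀ a, v (g a) ≠ u a} := ⟨⟨e, he⟩⟩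
    rw [Nat.factorial_eq_one.2 h]
    linarith [Nat.card_pos (α := {g : A ≃ B // ∀ a, v (g a) ≠ u a})]
  · exact (factorial_le_three_mul_numDerangements h).trans
      (Nat.mul_le_mul_left 3 (numDerangements_le_card_avoiding e hu hv))

end Avoiding

section CompatibleInvolutions

variable {V ι : Type*} [LinearOrder ι] (c : V → ι) (f₀ : V → V)

/-- The paper's `P_{i,j}`, for the colouring `c` by parts and the partner map `f₀` of `P₀`. -/
abbrev MatchedInto (i j : ι) : Type _ := {x : V // c x = i ∧ c (f₀ x) = j}

abbrev PairBijections : Type _ :=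
  ∀ p : {p : ι × ι // p.1 < p.2}, MatchedInto c f₀ p.1.1 p.1.2 ≃ MatchedInto c f₀ p.1.2 p.1.1

variable {c f₀}

def matchedIntoEquiv {f : V → V} (hf : Involutive f) (hc : ∀ x, c (f x) = c (f₀ x)) (i j : ι) :
    MatchedInto c f₀ i j ≃ MatchedInto c f₀ j i where
  toFun a := ⟨f a, by rw [hc]; exact a.2.2, by rw [← hc, hf]; exact a.2.1⟩
  invFun b := ⟨f b, by rw [hc]; exact b.2.2, by rw [← hc, hf]; exact b.2.1⟩
  left_inv a := Subtype.ext (hf a)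
  right_inv b := Subtype.ext (hf b)

def PairBijections.symmetrize (w : PairBijections c f₀) (i j : ι) (h : i ≠ j) :
    MatchedInto c f₀ i j ≃ MatchedInto c f₀ j i :=
  if hij : i < j then w ⟨(i, j), hij⟩ else (w ⟨(j, i), h.lt_or_gt.resolve_left hij⟩).symm

theorem PairBijections.symmetrize_symm (w : PairBijections c f₀) {i j : ι} (h : i ≠ j) :
    w.symmetrize j i h.symm = (w.symmetrize i j h).symm := by
  rcases h.lt_or_gt with hij | hji
  · rw [symmetrize, symmetrize, dif_pos hij, dif_neg (not_lt.2 hij.le)]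
  · rw [symmetrize, symmetrize, dif_pos hji, dif_neg (not_lt.2 hji.le), Equiv.symm_symm]

variable (hne : ∀ x, c x ≠ c (f₀ x))

def PairBijections.glue (w : PairBijections c f₀) (x : V) : V :=
  (w.symmetrize (c x) (c (f₀ x)) (hne x) ⟨x, rfl, rfl⟩).1

theorem PairBijections.glue_eq (w : PairBijections c f₀) {i j : ι} (hij : i ≠ j)
    (a : MatchedInto c f₀ i j) : w.glue hne a = (w.symmetrize i j hij a).1 := by
  obtain ⟨x, rfl, rfl⟩ := a
  rfl

theorem PairBijections.glue_compatible (w : PairBijections c f₀) (x : V) :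
    c (w.glue hne x) = c (f₀ x) :=
  (w.symmetrize _ _ (hne x) ⟨x, rfl, rfl⟩).2.1

theorem PairBijections.glue_involutive (w : PairBijections c f₀) : Involutive (w.glue hne) := by
  intro x
  set y := w.symmetrize _ _ (hne x) ⟨x, rfl, rfl⟩
  change w.glue hne y.1 = x
  rw [w.glue_eq hne (hne x).symm y, w.symmetrize_symm (hne x), Equiv.symm_apply_apply]

def compatibleEquiv :
    {f : V → V // Involutive f ∧ ∀ x, c (f x) = c (f₀ x)} ≃ PairBijections c f₀ where
  toFun f p := matchedIntoEquiv f.2.1 f.2.2 p.1.1 p.1.2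
  invFun w := ⟨w.glue hne, w.glue_involutive hne, w.glue_compatible hne⟩
  left_inv f := by
    refine Subtype.ext (funext fun x => ?_)
    dsimp only
    rw [PairBijections.glue, PairBijections.symmetrize]
    split_ifs <;> rfl
  right_inv w := by
    ext ⟨⟨i, j⟩, hij⟩ a
    change w.glue hne a.1 = _
    rw [w.glue_eq hne hij.ne a, PairBijections.symmetrize, dif_pos hij]

theorem forall_ne_iff_compatibleEquiv {fM : V → V} (hfM : Involutive fM)
    (f : {f : V → V // Involutive f ∧ ∀ x, c (f x) = c (f₀ x)}) :
    (∀ x, f.1 x ≠ fM x) ↔ ∀ p a, (compatibleEquiv hne f p a).1 ≠ fM a.1 := by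
  refine ⟨fun h p a => h a.1, fun h x hx => ?_⟩
  rcases (hne x).lt_or_gt with hlt | hgt
  · exact h ⟨(c x, c (f₀ x)), hlt⟩ ⟨x, rfl, rfl⟩ hx
  · -- an edge from the larger colour is seen from its other endpoint
    have hfx : c (f₀ (f.1 x)) = c x := by rw [← f.2.2, f.2.1]
    refine h ⟨(c (f₀ x), c x), hgt⟩ ⟨f.1 x, f.2.2 x, hfx⟩ ?_
    change f.1 (f.1 x) = fM (f.1 x)
    rw [f.2.1, hx, hfM]

end CompatibleInvolutions

theorem card_compatible_le_three_pow_mul {V ι : Type*} [Finite V] [LinearOrder ι] [Fintype ι]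
    {c : V → ι} {f₀ : V → V} (hf₀ : Involutive f₀) (hne : ∀ x, c x ≠ c (f₀ x)) {fM : V → V}
    (hfM : Involutive fM) (hdisj : ∀ x, f₀ x ≠ fM x) :
    Nat.card {f : V → V // Involutive f ∧ ∀ x, c (f x) = c (f₀ x)} ≤
      3 ^ (Fintype.card ι).choose 2 *
        Nat.card {f : V → V // Involutive f ∧ (∀ x, c (f x) = c (f₀ x)) ∧ ∀ x, f x ≠ fM x} := by
  let Avoiding (p : {p : ι × ι // p.1 < p.2}) :=
    {g : MatchedInto c f₀ p.1.1 p.1.2 ≃ MatchedInto c f₀ p.1.2 p.1.1 // ∀ a, (g a).1 ≠ fM a.1}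
  have hall : Nat.card {f : V → V // Involutive f ∧ ∀ x, c (f x) = c (f₀ x)} =
      ∏ p : {p : ι × ι // p.1 < p.2},
        Nat.card (MatchedInto c f₀ p.1.1 p.1.2 ≃ MatchedInto c f₀ p.1.2 p.1.1) := by
    rw [Nat.card_congr (compatibleEquiv hne), Nat.card_pi]
  have havoid : Nat.card
      {f : V → V // Involutive f ∧ (∀ x, c (f x) = c (f₀ x)) ∧ ∀ x, f x ≠ fM x} =
        ∏ p, Nat.card (Avoiding p) := by
    rw [← Nat.card_pi]
    refine Nat.card_congr ((Equiv.subtypeEquivRight fun f => and_assoc.symm).trans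
      ((Equiv.subtypeSubtypeEquivSubtypeInter _ (fun f => ∀ x, f x ≠ fM x)).symm.trans
      ((Equiv.subtypeEquiv (compatibleEquiv hne)
        (forall_ne_iff_compatibleEquiv hne hfM)).trans Equiv.subtypePiEquivPi)))
  have hpair (p : {p : ι × ι // p.1 < p.2}) :
      Nat.card (MatchedInto c f₀ p.1.1 p.1.2 ≃ MatchedInto c f₀ p.1.2 p.1.1) ≤
        3 * Nat.card (Avoiding p) :=
    card_equiv_le_three_mul_card_avoiding (matchedIntoEquiv hf₀ (fun _ => rfl) p.1.1 p.1.2)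
      (u := fun a : MatchedInto c f₀ p.1.1 p.1.2 => fM a.1)
      (hfM.injective.comp Subtype.val_injective) Subtype.val_injective fun a => hdisj a.1
  have hpairs : Fintype.card {p : ι × ι // p.1 < p.2} = (Fintype.card ι).choose 2 := by
    rw [Fintype.card_subtype, Fintype.card_product_filter_lt]
  calc _ = _ := hall
    _ ≤ ∏ p, 3 * Nat.card (Avoiding p) := Finset.prod_le_prod' fun p _ => hpair p
    _ = _ := by rw [Finset.prod_mul_distrib, Finset.prod_const, Finset.card_univ, hpairs, havoid]

theorem statement17_general (r : ℕ) (β : Fin r → Type) [∀ i, Fintype (β i)]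
    (M' P₀ : (completeMultipartiteGraph β).Subgraph)
    (hM' : M'.IsPerfectMatching) (hP₀ : P₀.IsPerfectMatching)
    (hdisj : P₀.edgeSet ∩ M'.edgeSet = ∅) :
    (Nat.card {U : (completeMultipartiteGraph β).Subgraph //
        U.IsPerfectMatching ∧ ∀ i j : Fin r,
          {x : Σ i', β i' | x.1 = i ∧ ∃ y, U.Adj x y ∧ y.1 = j} =
            {x : Σ i', β i' | x.1 = i ∧ ∃ y, P₀.Adj x y ∧ y.1 = j}} : ℝ) ≤
      alphaDer ^ (r.choose 2) *
        (Nat.card {U : (completeMultipartiteGraph β).Subgraph //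
          U.IsPerfectMatching ∧ (∀ i j : Fin r,
            {x : Σ i', β i' | x.1 = i ∧ ∃ y, U.Adj x y ∧ y.1 = j} =
              {x : Σ i', β i' | x.1 = i ∧ ∃ y, P₀.Adj x y ∧ y.1 = j}) ∧
            U.edgeSet ∩ M'.edgeSet = ∅} : ℝ) := by
  have hne (x : Σ i, β i) : x.1 ≠ (hP₀.partner x).1 := P₀.adj_sub (hP₀.adj_partner x)
  have hadj (f : (Σ i, β i) → Σ i, β i) (hf : ∀ x, (f x).1 = (hP₀.partner x).1) (x) :
      (completeMultipartiteGraph β).Adj x (f x) := by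
    change x.1 ≠ (f x).1
    rw [hf]
    exact hne x
  rw [Subgraph.card_isPerfectMatching_and (fun U hU => hU.setOf_adj_eq_iff Sigma.fst hP₀)
      fun f _ hf => hadj f hf,
    Subgraph.card_isPerfectMatching_and
      (Q' := fun f => (∀ x, (f x).1 = (hP₀.partner x).1) ∧ ∀ x, f x ≠ hM'.partner x)
      (fun U hU =>
        and_congr (hU.setOf_adj_eq_iff Sigma.fst hP₀) (hU.edgeSet_inter_eq_empty_iff hM'))
      fun f _ hf => hadj f hf.1,
    alphaDer_eq_three]
  exact_mod_cast Fintype.card_fin r ▸ card_compatible_le_three_pow_mul hP₀.partner_involutive hne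
    hM'.partner_involutive ((hP₀.edgeSet_inter_eq_empty_iff hM').1 hdisj)

/-- Let `r ≥ 2`, let `G'` be a complete `r`-partite graph with parts `V' i = β i`, let
`M'` be a perfect matching of `G'`, and let `α = sup_{N ≥ 2} N!/d_N`.  For a perfect
matching `P` of `G'` let `S(P) = (P_{i,j})`, where `P_{i,j}` is the set of vertices of
`V' i` matched by `P` into `V' j`.  If `S = S(P₀)` for some perfect matching `P₀` with
`P₀ ∩ M' = ∅`, then the number of perfect matchings `U` with `S(U) = S` is at most
`α^(r choose 2)` times the number of perfect matchings `U` with `S(U) = S` and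
`U ∩ M' = ∅`. -/
theorem statement17 (r : ℕ) (hr : 2 ≤ r) (β : Fin r → Type) [∀ i, Fintype (β i)]
    (M' P₀ : (completeMultipartiteGraph β).Subgraph)
    (hM' : M'.IsPerfectMatching) (hP₀ : P₀.IsPerfectMatching)
    (hdisj : P₀.edgeSet ∩ M'.edgeSet = ∅) :
    (Nat.card {U : (completeMultipartiteGraph β).Subgraph //
        U.IsPerfectMatching ∧ ∀ i j : Fin r,
          {x : Σ i', β i' | x.1 = i ∧ ∃ y, U.Adj x y ∧ y.1 = j} =
            {x : Σ i', β i' | x.1 = i ∧ ∃ y, P₀.Adj x y ∧ y.1 = j}} : ℝ) ≤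
      alphaDer ^ (r.choose 2) *
        (Nat.card {U : (completeMultipartiteGraph β).Subgraph //
          U.IsPerfectMatching ∧ (∀ i j : Fin r,
            {x : Σ i', β i' | x.1 = i ∧ ∃ y, U.Adj x y ∧ y.1 = j} =
              {x : Σ i', β i' | x.1 = i ∧ ∃ y, P₀.Adj x y ∧ y.1 = j}) ∧
            U.edgeSet ∩ M'.edgeSet = ∅} : ℝ) :=
  statement17_general r β M' P₀ hM' hP₀ hdisj
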